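/- With the above notation, let χ be any R-valued function on finitely supported functions n : ℕ≥1 → ℕ satisfying: χ(0) = 1; χ(n + 2·1_m) = ((c_m + o_m(n))² − (m·n(m))²)·χ(n) whenever n(j) = 0 for all j > m; and χ(n + 1_m) = (c_m + o_m(n))·χ(n) whenever n(j) = 0 for all j ≥ m. Then χ(n) = P(n) for every finitely supported n; i.e., the two recurrences and the normalization determine the explicit product formula. -/

import Mathlib

/-- `o_m(n) = ∑_{k ≥ 1, 2^k ∣ m} (m/2^k) · n(m/2^k)`. -/
def oFun (n : ℕ →₀ ℕ) (m : ℕ) : ℕ :=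
  ∑ k ∈ (Finset.Icc 1 m).filter (fun k => 2 ^ k ∣ m), (m / 2 ^ k) * n (m / 2 ^ k)

/-- The explicit product
`P(n) = ∏_{l : n(l) ≥ 1} (c_l + o_l(n)) · ∏_{i=0}^{n(l)−2} (c_l + o_l(n) + l·(n(l)−2−2i))`. -/
def Pfun {R : Type*} [CommRing R] (c : ℕ → R) (n : ℕ →₀ ℕ) : R :=
  ∏ l ∈ n.support,
    (c l + (oFun n l : R)) *
      ∏ i ∈ Finset.range (n l - 1),
        (c l + (oFun n l : R) + (((l : ℤ) * ((n l : ℤ) - 2 - 2 * (i : ℤ)) : ℤ) : R))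

/-!
`P` satisfies the normalization and both recurrences: its factor at the largest part `m` only
involves `n(m)` and `o_m(n)`, which depends only on `n` below `m`, and raising `n(m)` by two
multiplies that factor by the outer pair `(C + m n(m))(C - m n(m))`. Conversely every `n` is
built from `0` by adding its parts in increasing order, each part with one step `+1_m` if its
multiplicity is odd and then steps `+2·1_m`, so the recurrences determine `χ`.
-/

open Finset Finsupp

lemma oFun_congr {n n' : ℕ →₀ ℕ} {l : ℕ} (h : ∀ j < l, n j = n' j) :
    oFun n l = oFun n' l := by
  refine sum_congr rfl fun k hk => ?_
  obtain ⟨⟨hk1, hkl⟩, -⟩ := mem_filter.1 hk |>.imp_left mem_Icc.1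
  rw [h _ (Nat.div_lt_self (by omega) (Nat.one_lt_two_pow (by omega)))]

lemma oFun_add_single_of_le (n : ℕ →₀ ℕ) {l m : ℕ} (t : ℕ) (hl : l ≤ m) :
    oFun (n + single m t) l = oFun n l :=
  oFun_congr fun j hj => by simp [single_eq_of_ne (by omega : j ≠ m)]

section

variable {R : Type*} [CommRing R]

/-- The factor of `P(n)` at a part `l` of multiplicity `k`, with `C = c_l + o_l(n)`. It is `1`,
not `C`, when `k = 0`, so that products may run over any superset of the support. -/
def blockProd (C : R) (l k : ℕ) : R :=
  if k = 0 then 1 else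
    C * ∏ i ∈ range (k - 1), (C + (((l : ℤ) * ((k : ℤ) - 2 - 2 * (i : ℤ)) : ℤ) : R))

lemma blockProd_one (C : R) (l : ℕ) : blockProd C l 1 = C := by
  simp [blockProd]

lemma blockProd_add_two (C : R) (l k : ℕ) :
    blockProd C l (k + 2) = (C ^ 2 - ((l : R) * k) ^ 2) * blockProd C l k := by
  rcases k with _ | k
  · simp [blockProd, sq]
  · rw [blockProd, blockProd, if_neg (by omega), if_neg k.succ_ne_zero,
      show k + 1 + 2 - 1 = k + 1 + 1 by omega, prod_range_succ', prod_range_succ]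
    push_cast
    ring_nf

lemma Pfun_eq_prod_range (c : ℕ → R) {n : ℕ →₀ ℕ} {N : ℕ} (hN : ∀ j, N ≤ j → n j = 0) :
    Pfun c n = ∏ l ∈ range N, blockProd (c l + (oFun n l : R)) l (n l) := by
  have hsub : n.support ⊆ range N := fun l hl =>
    mem_range.2 (not_le.1 fun h => mem_support_iff.1 hl (hN l h))
  rw [Pfun, ← prod_subset hsub fun l _ hl => by rw [blockProd, if_pos (notMem_support_iff.1 hl)]]
  exact prod_congr rfl fun l hl => by rw [blockProd, if_neg (mem_support_iff.1 hl)]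

lemma Pfun_add_single (c : ℕ → R) {n : ℕ →₀ ℕ} {m : ℕ} (hm : ∀ j, m < j → n j = 0) (t : ℕ) :
    Pfun c (n + single m t) = blockProd (c m + (oFun n m : R)) m (n m + t) *
      ∏ l ∈ range m, blockProd (c l + (oFun n l : R)) l (n l) := by
  have hN : ∀ j, m + 1 ≤ j → (n + single m t) j = 0 := fun j hj => by
    simp [hm j hj, single_eq_of_ne (by omega : j ≠ m)]
  rw [Pfun_eq_prod_range c hN, prod_range_succ, mul_comm, Finsupp.add_apply, single_eq_same,
    oFun_add_single_of_le n t le_rfl]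
  congr 1
  refine prod_congr rfl fun l hl => ?_
  have hlm : l < m := mem_range.1 hl
  rw [Finsupp.add_apply, single_eq_of_ne (by omega), add_zero, oFun_add_single_of_le n t hlm.le]

lemma Pfun_eq_blockProd_mul (c : ℕ → R) {n : ℕ →₀ ℕ} {m : ℕ} (hm : ∀ j, m < j → n j = 0) :
    Pfun c n = blockProd (c m + (oFun n m : R)) m (n m) *
      ∏ l ∈ range m, blockProd (c l + (oFun n l : R)) l (n l) := by
  simpa using Pfun_add_single c hm 0

structure ChiRecurrence (c : ℕ → R) (χ : (ℕ →₀ ℕ) → R) : Prop where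
  map_zero : χ 0 = 1
  add_two : ∀ n : ℕ →₀ ℕ, n 0 = 0 → ∀ m : ℕ, 1 ≤ m → (∀ j, m < j → n j = 0) →
    χ (n + single m 2) = ((c m + (oFun n m : R)) ^ 2 - ((m : R) * (n m : R)) ^ 2) * χ n
  add_one : ∀ n : ℕ →₀ ℕ, n 0 = 0 → ∀ m : ℕ, 1 ≤ m → (∀ j, m ≤ j → n j = 0) →
    χ (n + single m 1) = (c m + (oFun n m : R)) * χ n

lemma Pfun_chiRecurrence (c : ℕ → R) : ChiRecurrence c (Pfun c) where
  map_zero := by simp [Pfun]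
  add_two n _ m _ hm := by
    rw [Pfun_add_single c hm, blockProd_add_two, Pfun_eq_blockProd_mul c hm, mul_assoc]
  add_one n _ m _ hm := by
    have hm' : ∀ j, m < j → n j = 0 := fun j hj => hm j hj.le
    rw [Pfun_add_single c hm', Pfun_eq_blockProd_mul c hm', hm m le_rfl, zero_add,
      blockProd_one, blockProd, if_pos rfl, one_mul]

namespace ChiRecurrence

variable {c : ℕ → R} {χ ψ : (ℕ →₀ ℕ) → R}

lemma eq_add_single (hχ : ChiRecurrence c χ) (hψ : ChiRecurrence c ψ) {n : ℕ →₀ ℕ} {m : ℕ}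
    (hn0 : n 0 = 0) (hm1 : 1 ≤ m) (hm : ∀ j, m ≤ j → n j = 0) (hn : χ n = ψ n) :
    ∀ t, χ (n + single m t) = ψ (n + single m t) := by
  intro t
  induction t using Nat.twoStepInduction with
  | zero => simpa using hn
  | one => rw [hχ.add_one n hn0 m hm1 hm, hψ.add_one n hn0 m hm1 hm, hn]
  | more t ih _ =>
    have hn0' : (n + single m t) 0 = 0 := by simp [hn0, single_eq_of_ne (by omega : (0 : ℕ) ≠ m)]
    have hm' : ∀ j, m < j → (n + single m t) j = 0 := fun j hj => by
      simp [hm j hj.le, single_eq_of_ne (by omega : j ≠ m)]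
    rw [Finsupp.single_add, ← add_assoc, hχ.add_two _ hn0' m hm1 hm',
      hψ.add_two _ hn0' m hm1 hm', ih]

theorem eq (hχ : ChiRecurrence c χ) (hψ : ChiRecurrence c ψ) :
    ∀ n : ℕ →₀ ℕ, n 0 = 0 → χ n = ψ n := by
  intro n
  induction n using Finsupp.induction_on_max₂ with
  | zero => intro; rw [hχ.map_zero, hψ.map_zero]
  | add_single m t n hlt ht ih =>
    intro h0
    have hn0 : n 0 = 0 := by rw [Finsupp.add_apply] at h0; omega
    have hm1 : 1 ≤ m := Nat.one_le_iff_ne_zero.2 fun hm0 => ht (by simpa [hm0, hn0] using h0)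
    have hm : ∀ j, m ≤ j → n j = 0 := fun j hj =>
      notMem_support_iff.1 fun hj' => (hlt j hj').not_ge hj
    exact eq_add_single hχ hψ hn0 hm1 hm (ih hn0) t

end ChiRecurrence

end

/-- Any function `χ` on finitely supported multiplicity functions (supported on
positive integers) satisfying `χ(0) = 1` together with the two recurrences
`χ(n + 2·1_m) = ((c_m + o_m(n))² − (m·n(m))²)·χ(n)` (whenever `n(j) = 0` for `j > m`)
and `χ(n + 1_m) = (c_m + o_m(n))·χ(n)` (whenever `n(j) = 0` for `j ≥ m`)
coincides with the explicit product `P`. -/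
theorem chi_eq_Pfun {R : Type*} [CommRing R] (c : ℕ → R) (χ : (ℕ →₀ ℕ) → R)
    (hzero : χ 0 = 1)
    (hrec2 : ∀ n : ℕ →₀ ℕ, n 0 = 0 → ∀ m : ℕ, 1 ≤ m → (∀ j, m < j → n j = 0) →
      χ (n + Finsupp.single m 2) =
        ((c m + (oFun n m : R)) ^ 2 - ((m : R) * (n m : R)) ^ 2) * χ n)
    (hrec1 : ∀ n : ℕ →₀ ℕ, n 0 = 0 → ∀ m : ℕ, 1 ≤ m → (∀ j, m ≤ j → n j = 0) →
      χ (n + Finsupp.single m 1) = (c m + (oFun n m : R)) * χ n) :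
    ∀ n : ℕ →₀ ℕ, n 0 = 0 → χ n = Pfun c n :=
  ChiRecurrence.eq ⟨hzero, hrec2, hrec1⟩ (Pfun_chiRecurrence c)
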